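/- For y_i, y_j in the open unit ball of R^{d-1} with ‖y_j‖ ≤ ‖y_i‖, the quantity (1 - ‖y_i‖²)·⟨y_i, y_j⟩ - √(1-‖y_i‖²)·√(1-‖y_j‖²)·‖y_i‖² is nonpositive, and it is strictly negative if y_i ≠ y_j and y_i ≠ 0. -/
import Mathlib


open scoped RealInnerProductSpace

theorem equatorial_lyapunov_inequality
    {n : ℕ} (hn : 1 ≤ n) (yi yj : EuclideanSpace ℝ (Fin n))
    (hyi : ‖yi‖ < 1) (hyj : ‖yj‖ < 1) (hle : ‖yj‖ ≤ ‖yi‖) :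
    (1 - ‖yi‖ ^ 2) * ⟪yi, yj⟫ -
        Real.sqrt (1 - ‖yi‖ ^ 2) * Real.sqrt (1 - ‖yj‖ ^ 2) * ‖yi‖ ^ 2 ≤ 0 ∧
    (yi ≠ yj → yi ≠ 0 →
      (1 - ‖yi‖ ^ 2) * ⟪yi, yj⟫ -
        Real.sqrt (1 - ‖yi‖ ^ 2) * Real.sqrt (1 - ‖yj‖ ^ 2) * ‖yi‖ ^ 2 < 0) := by
  have hai : (0:ℝ) ≤ ‖yi‖ := norm_nonneg _
  have haj : (0:ℝ) ≤ ‖yj‖ := norm_nonneg _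
  have ha2 : (0:ℝ) < 1 - ‖yi‖ ^ 2 := by nlinarith
  have hb2 : (0:ℝ) < 1 - ‖yj‖ ^ 2 := by nlinarith
  have hcs : ⟪yi, yj⟫ ≤ ‖yi‖ * ‖yj‖ := real_inner_le_norm yi yj
  have hsq : 1 - ‖yi‖ ^ 2 ≤ Real.sqrt (1 - ‖yi‖ ^ 2) * Real.sqrt (1 - ‖yj‖ ^ 2) := by
    calc 1 - ‖yi‖ ^ 2 = Real.sqrt (1 - ‖yi‖ ^ 2) * Real.sqrt (1 - ‖yi‖ ^ 2) :=
          (Real.mul_self_sqrt ha2.le).symm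
      _ ≤ Real.sqrt (1 - ‖yi‖ ^ 2) * Real.sqrt (1 - ‖yj‖ ^ 2) :=
          mul_le_mul_of_nonneg_left (Real.sqrt_le_sqrt (by nlinarith)) (Real.sqrt_nonneg _)
  constructor
  · nlinarith [mul_le_mul_of_nonneg_left hcs ha2.le,
      mul_le_mul_of_nonneg_right hsq (sq_nonneg ‖yi‖),
      mul_nonneg (mul_nonneg hai ha2.le) (sub_nonneg.mpr hle)]
  · intro hne hne0
    have ha0 : 0 < ‖yi‖ := norm_pos_iff.mpr hne0
    rcases lt_or_eq_of_le hle with hlt | heq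
    · have h1 : ⟪yi, yj⟫ < ‖yi‖ ^ 2 := by nlinarith
      nlinarith [mul_le_mul_of_nonneg_right hsq (sq_nonneg ‖yi‖)]
    · have h1 : ⟪yi, yj⟫ < ‖yi‖ * ‖yj‖ := by
        rcases lt_or_eq_of_le hcs with h | h
        · exact h
        · exfalso
          have := inner_eq_norm_mul_iff_real.mp h
          rw [heq] at this
          exact hne ((smul_right_injective _ (by positivity : ‖yi‖ ≠ 0)) this)
      rw [heq] at h1
      nlinarith [mul_le_mul_of_nonneg_right hsq (sq_nonneg ‖yi‖)]
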